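/- The quaternionic biquandle operations a^b = j·a + (1+i)·b and a_b = −j·a + (1+i)·b satisfy the third Reidemeister biquandle identities: for all quaternions a, b, c: (a^b)^c = (a^{c_b})^{b^c}, (c_b)_a = (c_{a^b})_{b_a}, and (b_a)^{c_{a^b}} = (b^c)_{a^{c_b}}. -/

import Mathlib

/-!
Both operations are affine-linear, `a^b = t a + s b` and `a_b = -t a + s b` with `t = j`, `s = 1 + i`,
so each Reidemeister III identity compares two linear combinations of `a, b, c` with coefficients
noncommutative words in `t` and `s`. Comparing coefficients, all three identities follow from the
three relations `t s = t s² + s t`, `s = s² - t s t` and `s t = t s + s² t`, which hold for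
`j` and `1 + i` since `(1 + i)² = 2i`.
-/

open Quaternion

noncomputable section

/-- The quaternion i. -/
def qi : ℍ[ℚ] := ⟨0, 1, 0, 0⟩
/-- The quaternion j. -/
def qj : ℍ[ℚ] := ⟨0, 0, 1, 0⟩

/-- a^b = j·a + (1+i)·b -/
def upR (a b : ℍ[ℚ]) : ℍ[ℚ] := qj * a + (1 + qi) * b
/-- a_b = −j·a + (1+i)·b -/
def dnR (a b : ℍ[ℚ]) : ℍ[ℚ] := -(qj * a) + (1 + qi) * b

namespace LinearBiquandle

variable {R M : Type*} [Ring R] [AddCommGroup M] [Module R M] (t s : R)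

def up (a b : M) : M := t • a + s • b

def down (a b : M) : M := -(t • a) + s • b

variable {t s}

theorem reidemeister3_up (h₁ : t * s = t * (s * s) + s * t) (h₂ : s = s * s - t * (s * t))
    (a b c : M) :
    up t s (up t s a b) c = up t s (up t s a (down t s c b)) (up t s b c) := by
  have hb : (t * s) • b = (t * (s * s)) • b + (s * t) • b := by rw [← add_smul, ← h₁]
  have hc : s • c = (s * s) • c - (t * (s * t)) • c := by rw [← sub_smul, ← h₂]
  simp only [up, down, smul_add, smul_neg, smul_smul]
  rw [hb, hc]
  abel

theorem reidemeister3_down (h₁ : t * s = t * (s * s) + s * t) (h₂ : s = s * s - t * (s * t))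
    (a b c : M) :
    down t s (down t s c b) a = down t s (down t s c (up t s a b)) (down t s b a) := by
  have hb : (t * s) • b = (t * (s * s)) • b + (s * t) • b := by rw [← add_smul, ← h₁]
  have ha : s • a = (s * s) • a - (t * (s * t)) • a := by rw [← sub_smul, ← h₂]
  simp only [up, down, smul_add, smul_neg, smul_smul]
  rw [hb, ha]
  abel

theorem reidemeister3_mixed (h₃ : s * t = t * s + s * (s * t)) (a b c : M) :
    up t s (down t s b a) (down t s c (up t s a b)) =
      down t s (up t s b c) (up t s a (down t s c b)) := by
  have ha : (s * t) • a = (t * s) • a + (s * (s * t)) • a := by rw [← add_smul, ← h₃]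
  have hc : (s * t) • c = (t * s) • c + (s * (s * t)) • c := by rw [← add_smul, ← h₃]
  simp only [up, down, smul_add, smul_neg, smul_smul]
  rw [ha, hc]
  abel

end LinearBiquandle

@[simp] theorem qi_re : qi.re = 0 := rfl
@[simp] theorem qi_imI : qi.imI = 1 := rfl
@[simp] theorem qi_imJ : qi.imJ = 0 := rfl
@[simp] theorem qi_imK : qi.imK = 0 := rfl
@[simp] theorem qj_re : qj.re = 0 := rfl
@[simp] theorem qj_imI : qj.imI = 0 := rfl
@[simp] theorem qj_imJ : qj.imJ = 1 := rfl
@[simp] theorem qj_imK : qj.imK = 0 := rfl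

theorem qj_mul_one_add_qi_eq :
    qj * (1 + qi) = qj * ((1 + qi) * (1 + qi)) + (1 + qi) * qj := by
  ext <;> simp

theorem one_add_qi_eq : 1 + qi = (1 + qi) * (1 + qi) - qj * ((1 + qi) * qj) := by
  ext <;> simp

theorem one_add_qi_mul_qj_eq :
    (1 + qi) * qj = qj * (1 + qi) + (1 + qi) * ((1 + qi) * qj) := by
  ext <;> simp

theorem upR_eq_up : upR = LinearBiquandle.up qj (1 + qi) := rfl

theorem dnR_eq_down : dnR = LinearBiquandle.down qj (1 + qi) := rfl

/-- The third Reidemeister biquandle identities for the quaternionic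
biquandle operations: (a^b)^c = (a^{c_b})^{b^c}, (c_b)_a = (c_{a^b})_{b_a},
(b_a)^{c_{a^b}} = (b^c)_{a^{c_b}}. -/
theorem stmt_4 (a b c : ℍ[ℚ]) :
    upR (upR a b) c = upR (upR a (dnR c b)) (upR b c) ∧
    dnR (dnR c b) a = dnR (dnR c (upR a b)) (dnR b a) ∧
    upR (dnR b a) (dnR c (upR a b)) = dnR (upR b c) (upR a (dnR c b)) := by
  rw [upR_eq_up, dnR_eq_down]
  exact ⟨LinearBiquandle.reidemeister3_up qj_mul_one_add_qi_eq one_add_qi_eq a b c,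
    LinearBiquandle.reidemeister3_down qj_mul_one_add_qi_eq one_add_qi_eq a b c,
    LinearBiquandle.reidemeister3_mixed one_add_qi_mul_qj_eq a b c⟩
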